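/- The quantum Chernoff quantity between Poisson states in the Poisson limit: with ρ_M = ((1−N/M)τ₀ ⊕ (N/M)τ₁)^{⊗M}, ρ'_M = ((1−N'/M)τ₀ ⊕ (N'/M)τ₁')^{⊗M}, and s ∈ [0,1], lim_{M→∞} tr(ρ_M^s ρ'^{1−s}_M) = exp(−sN − (1−s)N' + N^s N'^{1−s} tr(τ₁^s τ₁'^{1−s})). -/

import Mathlib

open Matrix Kronecker ComplexOrder Filter

open Classical in
/-- Real power of a positive semidefinite matrix via the functional calculus, with the
convention `0 ^ s = 0` on the kernel (junk value `0` for non-PSD input). -/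
noncomputable def matRpow {n : Type*} [Fintype n] [DecidableEq n]
    (A : Matrix n n ℂ) (s : ℝ) : Matrix n n ℂ :=
  if h : A.PosSemidef then
    (h.1.eigenvectorUnitary : Matrix n n ℂ) *
      Matrix.diagonal (fun i =>
        ((if h.1.eigenvalues i = 0 then 0 else (h.1.eigenvalues i) ^ s : ℝ) : ℂ)) *
      (star h.1.eigenvectorUnitary : Matrix n n ℂ)
  else 0

/-- The quantum Chernoff quantity `C_s(A,B) = tr (A^s B^{1−s})`. -/
noncomputable def cher {n : Type*} [Fintype n] [DecidableEq n]
    (A B : Matrix n n ℂ) (s : ℝ) : ℂ :=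
  (matRpow A s * matRpow B (1 - s)).trace

/-- `M`-fold tensor power of a matrix, realized on the index set `Fin M → k`. -/
noncomputable def tpow {k : Type*} (τ : Matrix k k ℂ) (M : ℕ) :
    Matrix (Fin M → k) (Fin M → k) ℂ :=
  Matrix.of fun i j => ∏ m, τ (i m) (j m)

/-- The single-temporal-mode rare state `(1 − N/M) τ₀ ⊕ (N/M) τ₁`, where `τ₀` is the
unique density operator on a 1-dimensional space. -/
noncomputable def rareState {d : ℕ} (N : ℝ) (τ₁ : Matrix (Fin d) (Fin d) ℂ) (M : ℕ) :
    Matrix (Unit ⊕ Fin d) (Unit ⊕ Fin d) ℂ :=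
  Matrix.fromBlocks (((1 - N / M : ℝ) : ℂ) • 1) 0 0 (((N / M : ℝ) : ℂ) • τ₁)

/-! Both states are block diagonal with blocks `(1 - p) τ₀` and `p τ₁`, `p = N / M`, so the
one-mode Chernoff quantity is `(1 - p)^s (1 - p')^(1-s) + p^s p'^(1-s) tr (τ₁^s τ₁'^(1-s))`,
which is `1 + L / M + o(1 / M)` with `L` the exponent of the limit. A tensor power of a unitary
diagonalization is again one, so matrix powers commute with tensor powers and the `M`-mode
quantity is the `M`-th power of the one-mode one; `(1 + L / M + o(1 / M))^M → exp L`. -/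

/-- The scalar function that `matRpow` applies to eigenvalues: unlike `x ^ s`, it vanishes at
`x = 0` even for `s = 0`. -/
noncomputable def rpow₀ (s x : ℝ) : ℝ := if x = 0 then 0 else x ^ s

lemma rpow₀_of_ne_zero (s : ℝ) {x : ℝ} (hx : x ≠ 0) : rpow₀ s x = x ^ s := if_neg hx

lemma rpow₀_mul (s : ℝ) {x y : ℝ} (hx : 0 ≤ x) (hy : 0 ≤ y) :
    rpow₀ s (x * y) = rpow₀ s x * rpow₀ s y := by
  rcases hx.eq_or_lt with rfl | hx
  · simp [rpow₀]
  rcases hy.eq_or_lt with rfl | hy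
  · simp [rpow₀]
  rw [rpow₀_of_ne_zero s hx.ne', rpow₀_of_ne_zero s hy.ne',
    rpow₀_of_ne_zero s (mul_pos hx hy).ne', Real.mul_rpow hx.le hy.le]

lemma rpow₀_prod (s : ℝ) {ι : Type*} (t : Finset ι) {g : ι → ℝ} (hg : ∀ i ∈ t, 0 ≤ g i) :
    rpow₀ s (∏ i ∈ t, g i) = ∏ i ∈ t, rpow₀ s (g i) := by
  induction t using Finset.cons_induction with
  | empty => simp [rpow₀]
  | cons a t ha ih =>
    rw [Finset.forall_mem_cons] at hg
    rw [Finset.prod_cons, Finset.prod_cons, rpow₀_mul s hg.1 (Finset.prod_nonneg hg.2), ih hg.2]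

namespace Matrix

lemma fromBlocks_conj {n m : Type*} [Fintype n] [Fintype m] (U A : Matrix n n ℂ)
    (V B : Matrix m m ℂ) :
    fromBlocks (U * A * star U) 0 0 (V * B * star V)
      = fromBlocks U 0 0 V * fromBlocks A 0 0 B * star (fromBlocks U 0 0 V) := by
  simp [star_eq_conjTranspose, fromBlocks_conjTranspose, fromBlocks_multiply]

lemma PosSemidef.ofReal_smul {n : Type*} {A : Matrix n n ℂ} (hA : A.PosSemidef) {c : ℝ}
    (hc : 0 ≤ c) : ((c : ℂ) • A).PosSemidef :=
  hA.smul (Complex.zero_le_real.mpr hc)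

variable {n m : Type*} [Fintype n] [DecidableEq n] [Fintype m] [DecidableEq m]

lemma mul_diagonal_map_eq_of_mul_diagonal_eq {W : Matrix n n ℂ} {D E : n → ℝ}
    (h : W * diagonal (fun i => (D i : ℂ)) = diagonal (fun i => (E i : ℂ)) * W) (f : ℝ → ℝ) :
    W * diagonal (fun i => (f (D i) : ℂ)) = diagonal (fun i => (f (E i) : ℂ)) * W := by
  ext i j
  have hij := congr_fun₂ h i j
  simp only [mul_diagonal, diagonal_mul] at hij ⊢
  by_cases hW : W i j = 0
  · simp [hW]
  · have : D j = E i := by exact_mod_cast mul_left_cancel₀ hW (hij.trans (mul_comm _ _))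
    rw [this, mul_comm]

lemma conj_diagonal_map_eq {U V : Matrix n n ℂ} (hU : U ∈ unitaryGroup n ℂ)
    (hV : V ∈ unitaryGroup n ℂ) {D E : n → ℝ}
    (h : U * diagonal (fun i => (D i : ℂ)) * star U = V * diagonal (fun i => (E i : ℂ)) * star V)
    (f : ℝ → ℝ) :
    U * diagonal (fun i => (f (D i) : ℂ)) * star U
      = V * diagonal (fun i => (f (E i) : ℂ)) * star V := by
  have hUU := Unitary.star_mul_self_of_mem hU
  have hUU' := Unitary.mul_star_self_of_mem hU
  have hVV := Unitary.star_mul_self_of_mem hV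
  have hVV' := Unitary.mul_star_self_of_mem hV
  have hW : star V * U * diagonal (fun i => (D i : ℂ))
      = diagonal (fun i => (E i : ℂ)) * (star V * U) := by
    calc star V * U * diagonal (fun i => (D i : ℂ))
        = star V * (U * diagonal (fun i => (D i : ℂ)) * star U) * U := by
          simp only [mul_assoc, hUU, mul_one]
      _ = _ := by rw [h]; simp only [← mul_assoc, hVV, one_mul]
  have hWf := mul_diagonal_map_eq_of_mul_diagonal_eq hW f
  calc U * diagonal (fun i => (f (D i) : ℂ)) * star U
      = V * (star V * U * diagonal (fun i => (f (D i) : ℂ))) * star U := by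
        simp only [← mul_assoc, hVV', one_mul]
    _ = _ := by rw [hWf]; simp only [mul_assoc, hUU', mul_one]

lemma posSemidef_conj_diagonal (U : Matrix n n ℂ) {D : n → ℝ} (hD : ∀ i, 0 ≤ D i) :
    (U * diagonal (fun i => (D i : ℂ)) * star U).PosSemidef := by
  have hdiag : (diagonal (fun i => (D i : ℂ))).PosSemidef :=
    posSemidef_diagonal_iff.mpr fun i => Complex.zero_le_real.mpr (hD i)
  simpa [star_eq_conjTranspose] using hdiag.mul_mul_conjTranspose_same U

lemma IsHermitian.eq_conj_diagonal_eigenvalues {A : Matrix n n ℂ} (hA : A.IsHermitian) :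
    A = (hA.eigenvectorUnitary : Matrix n n ℂ) * diagonal (fun i => (hA.eigenvalues i : ℂ))
      * star (hA.eigenvectorUnitary : Matrix n n ℂ) := by
  simpa [Function.comp_def] using hA.spectral_theorem

lemma PosSemidef.exists_conj_diagonal {A : Matrix n n ℂ} (hA : A.PosSemidef) :
    ∃ U ∈ unitaryGroup n ℂ, ∃ D : n → ℝ, (∀ i, 0 ≤ D i) ∧
      A = U * diagonal (fun i => (D i : ℂ)) * star U :=
  ⟨_, hA.1.eigenvectorUnitary.2, _, hA.eigenvalues_nonneg, hA.1.eq_conj_diagonal_eigenvalues⟩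

lemma smul_conj_diagonal (c : ℂ) (U : Matrix n n ℂ) (d : n → ℂ) :
    c • (U * diagonal d * star U) = U * diagonal (fun i => c * d i) * star U := by
  rw [show (fun i => c * d i) = c • d from rfl, diagonal_smul, Matrix.mul_smul, Matrix.smul_mul]

lemma matRpow_conj_diagonal {U : Matrix n n ℂ} (hU : U ∈ unitaryGroup n ℂ) {D : n → ℝ}
    (hD : ∀ i, 0 ≤ D i) (s : ℝ) :
    matRpow (U * diagonal (fun i => (D i : ℂ)) * star U) s
      = U * diagonal (fun i => (rpow₀ s (D i) : ℂ)) * star U := by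
  have hA := posSemidef_conj_diagonal U hD
  rw [matRpow, dif_pos hA]
  exact conj_diagonal_map_eq hA.1.eigenvectorUnitary.2 hU
    hA.1.eq_conj_diagonal_eigenvalues.symm (rpow₀ s)

lemma matRpow_smul {A : Matrix n n ℂ} (hA : A.PosSemidef) {c : ℝ} (hc : 0 < c) (s : ℝ) :
    matRpow ((c : ℂ) • A) s = ((c ^ s : ℝ) : ℂ) • matRpow A s := by
  obtain ⟨U, hU, D, hD, rfl⟩ := hA.exists_conj_diagonal
  rw [smul_conj_diagonal, matRpow_conj_diagonal hU hD, smul_conj_diagonal]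
  simp_rw [← Complex.ofReal_mul]
  rw [matRpow_conj_diagonal hU (fun i => mul_nonneg hc.le (hD i))]
  simp only [rpow₀_mul s hc.le (hD _), rpow₀_of_ne_zero s hc.ne']

lemma matRpow_one (s : ℝ) : matRpow (1 : Matrix n n ℂ) s = 1 := by
  simpa [rpow₀] using matRpow_conj_diagonal (one_mem (unitaryGroup n ℂ))
    (fun _ : n => zero_le_one) s

lemma fromBlocks_mem_unitaryGroup {U : Matrix n n ℂ} {V : Matrix m m ℂ}
    (hU : U ∈ unitaryGroup n ℂ) (hV : V ∈ unitaryGroup m ℂ) :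
    fromBlocks U 0 0 V ∈ unitaryGroup (n ⊕ m) ℂ := by
  have h := fromBlocks_conj U 1 V 1
  simp only [mul_one, fromBlocks_one, Unitary.mul_star_self_of_mem hU,
    Unitary.mul_star_self_of_mem hV] at h
  exact mem_unitaryGroup_iff.mpr h.symm

lemma fromBlocks_conj_diagonal (U : Matrix n n ℂ) (V : Matrix m m ℂ) (D : n → ℝ) (E : m → ℝ) :
    fromBlocks (U * diagonal (fun i => (D i : ℂ)) * star U) 0 0
        (V * diagonal (fun i => (E i : ℂ)) * star V)
      = fromBlocks U 0 0 V * diagonal (fun i => ((Sum.elim D E i : ℝ) : ℂ))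
        * star (fromBlocks U 0 0 V) := by
  rw [fromBlocks_conj, fromBlocks_diagonal]
  congr 3
  ext (i | i) <;> rfl

lemma PosSemidef.fromBlocks_zero {A : Matrix n n ℂ} {B : Matrix m m ℂ} (hA : A.PosSemidef)
    (hB : B.PosSemidef) : (fromBlocks A 0 0 B).PosSemidef := by
  obtain ⟨U, -, D, hD, rfl⟩ := hA.exists_conj_diagonal
  obtain ⟨V, -, E, hE, rfl⟩ := hB.exists_conj_diagonal
  rw [fromBlocks_conj_diagonal]
  exact posSemidef_conj_diagonal _ (Sum.forall.mpr ⟨hD, hE⟩)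

lemma matRpow_fromBlocks {A : Matrix n n ℂ} {B : Matrix m m ℂ} (hA : A.PosSemidef)
    (hB : B.PosSemidef) (s : ℝ) :
    matRpow (fromBlocks A 0 0 B) s = fromBlocks (matRpow A s) 0 0 (matRpow B s) := by
  obtain ⟨U, hU, D, hD, rfl⟩ := hA.exists_conj_diagonal
  obtain ⟨V, hV, E, hE, rfl⟩ := hB.exists_conj_diagonal
  rw [fromBlocks_conj_diagonal, matRpow_conj_diagonal (fromBlocks_mem_unitaryGroup hU hV)
    (Sum.forall.mpr ⟨hD, hE⟩), matRpow_conj_diagonal hU hD, matRpow_conj_diagonal hV hE,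
    fromBlocks_conj, fromBlocks_diagonal]
  congr 3
  ext (i | i) <;> rfl

end Matrix

open Matrix

section TensorPower

variable {k : Type*} (M : ℕ)

lemma tpow_star (A : Matrix k k ℂ) : tpow (star A) M = star (tpow A M) := by
  ext i j
  simp [tpow, star_prod]

lemma tpow_mul [Fintype k] (A B : Matrix k k ℂ) : tpow (A * B) M = tpow A M * tpow B M := by
  ext i j
  simp only [tpow, of_apply, mul_apply, Finset.prod_univ_sum, Fintype.piFinset_univ,
    Finset.prod_mul_distrib]

lemma tpow_diagonal [DecidableEq k] (g : k → ℂ) :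
    tpow (diagonal g) M = diagonal (fun i => ∏ m, g (i m)) := by
  ext i j
  simp only [tpow, of_apply, diagonal_apply]
  split_ifs with h
  · simp [h]
  · obtain ⟨m, hm⟩ := Function.ne_iff.mp h
    exact Finset.prod_eq_zero (Finset.mem_univ m) (if_neg hm)

lemma tpow_one [DecidableEq k] : tpow (1 : Matrix k k ℂ) M = 1 := by
  simpa using tpow_diagonal M (1 : k → ℂ)

lemma trace_tpow [Fintype k] (A : Matrix k k ℂ) : (tpow A M).trace = A.trace ^ M := by
  simpa [trace, tpow] using
    (Finset.prod_univ_sum (fun _ : Fin M => (Finset.univ : Finset k)) fun _ i => A i i).symm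

variable [Fintype k] [DecidableEq k]

lemma tpow_mem_unitaryGroup {U : Matrix k k ℂ} (hU : U ∈ unitaryGroup k ℂ) :
    tpow U M ∈ unitaryGroup (Fin M → k) ℂ := by
  rw [mem_unitaryGroup_iff, ← tpow_star, ← tpow_mul, Unitary.mul_star_self_of_mem hU, tpow_one]

lemma tpow_conj_diagonal (U : Matrix k k ℂ) (D : k → ℝ) :
    tpow (U * diagonal (fun i => (D i : ℂ)) * star U) M
      = tpow U M * diagonal (fun i => ((∏ m, D (i m) : ℝ) : ℂ)) * star (tpow U M) := by
  rw [tpow_mul, tpow_mul, tpow_diagonal, tpow_star]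
  push_cast
  rfl

lemma matRpow_tpow {A : Matrix k k ℂ} (hA : A.PosSemidef) (s : ℝ) :
    matRpow (tpow A M) s = tpow (matRpow A s) M := by
  obtain ⟨U, hU, D, hD, rfl⟩ := hA.exists_conj_diagonal
  rw [tpow_conj_diagonal, matRpow_conj_diagonal (tpow_mem_unitaryGroup M hU)
    (fun i => Finset.prod_nonneg fun m _ => hD (i m)), matRpow_conj_diagonal hU hD,
    tpow_conj_diagonal]
  simp_rw [rpow₀_prod s Finset.univ fun m _ => hD _]

end TensorPower

section Chernoff

variable {n m : Type*} [Fintype n] [DecidableEq n] [Fintype m] [DecidableEq m]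

lemma cher_tpow {A B : Matrix n n ℂ} (hA : A.PosSemidef) (hB : B.PosSemidef) (s : ℝ) (M : ℕ) :
    cher (tpow A M) (tpow B M) s = cher A B s ^ M := by
  rw [cher, matRpow_tpow M hA, matRpow_tpow M hB, ← tpow_mul, trace_tpow, cher]

lemma cher_fromBlocks {A A' : Matrix n n ℂ} {B B' : Matrix m m ℂ} (hA : A.PosSemidef)
    (hA' : A'.PosSemidef) (hB : B.PosSemidef) (hB' : B'.PosSemidef) (s : ℝ) :
    cher (fromBlocks A 0 0 B) (fromBlocks A' 0 0 B') s = cher A A' s + cher B B' s := by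
  simp [cher, matRpow_fromBlocks hA hB, matRpow_fromBlocks hA' hB', fromBlocks_multiply,
    trace, Fintype.sum_sum_type]

lemma cher_smul {A B : Matrix n n ℂ} (hA : A.PosSemidef) (hB : B.PosSemidef) {a b : ℝ}
    (ha : 0 < a) (hb : 0 < b) (s : ℝ) :
    cher ((a : ℂ) • A) ((b : ℂ) • B) s = ((a ^ s * b ^ (1 - s) : ℝ) : ℂ) * cher A B s := by
  simp only [cher, matRpow_smul hA ha, matRpow_smul hB hb, Matrix.smul_mul, Matrix.mul_smul,
    trace_smul, smul_eq_mul, Complex.ofReal_mul]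
  ring

lemma cher_one (s : ℝ) : cher (1 : Matrix n n ℂ) 1 s = Fintype.card n := by
  simp [cher, matRpow_one]

end Chernoff

section RareState

variable {d : ℕ} {N : ℝ} {τ : Matrix (Fin d) (Fin d) ℂ} {M : ℕ}

lemma rareState_posSemidef (hτ : τ.PosSemidef) (hN : 0 ≤ N) (hNM : N ≤ M) :
    (rareState N τ M).PosSemidef := by
  have hp : 0 ≤ N / M := div_nonneg hN (hN.trans hNM)
  have hq : 0 ≤ 1 - N / M := sub_nonneg.mpr (div_le_one_of_le₀ hNM (hN.trans hNM))
  exact (PosSemidef.one.ofReal_smul hq).fromBlocks_zero (hτ.ofReal_smul hp)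

lemma cher_rareState {N' : ℝ} {τ' : Matrix (Fin d) (Fin d) ℂ} (hτ : τ.PosSemidef)
    (hτ' : τ'.PosSemidef) (hN : 0 < N) (hNM : N < M) (hN' : 0 < N') (hNM' : N' < M) (s : ℝ) :
    cher (rareState N τ M) (rareState N' τ' M) s
      = (((1 - N / M) ^ s * (1 - N' / M) ^ (1 - s) : ℝ) : ℂ)
        + (((N / M) ^ s * (N' / M) ^ (1 - s) : ℝ) : ℂ) * cher τ τ' s := by
  have hM : (0 : ℝ) < M := hN.trans hNM
  have hp := div_pos hN hM
  have hp' := div_pos hN' hM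
  have hq : 0 < 1 - N / M := sub_pos.mpr ((div_lt_one hM).mpr hNM)
  have hq' : 0 < 1 - N' / M := sub_pos.mpr ((div_lt_one hM).mpr hNM')
  rw [rareState, rareState, cher_fromBlocks (PosSemidef.one.ofReal_smul hq.le)
    (PosSemidef.one.ofReal_smul hq'.le) (hτ.ofReal_smul hp.le) (hτ'.ofReal_smul hp'.le),
    cher_smul PosSemidef.one PosSemidef.one hq hq', cher_smul hτ hτ' hp hp', cher_one]
  simp

end RareState

open Topology

lemma mul_div_rpow_mul_div_rpow {x a b : ℝ} (hx : 0 < x) (ha : 0 ≤ a) (hb : 0 ≤ b) (s : ℝ) :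
    x * ((a / x) ^ s * (b / x) ^ (1 - s)) = a ^ s * b ^ (1 - s) := by
  rw [Real.div_rpow ha hx.le, Real.div_rpow hb hx.le, div_mul_div_comm, ← Real.rpow_add hx,
    add_sub_cancel, Real.rpow_one]
  field_simp

lemma HasDerivAt.tendsto_nat_mul_sub {f : ℝ → ℝ} {f' : ℝ} (hf : HasDerivAt f f' 0) :
    Tendsto (fun n : ℕ => n * (f (n : ℝ)⁻¹ - f 0)) atTop (𝓝 f') := by
  have hinv : Tendsto (fun n : ℕ => (n : ℝ)⁻¹) atTop (𝓝[≠] 0) :=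
    (tendsto_nhdsWithin_mono_right (fun _ hx => ne_of_gt hx) tendsto_inv_atTop_nhdsGT_zero).comp
      tendsto_natCast_atTop_atTop
  refine ((hasDerivAt_iff_tendsto_slope.mp hf).comp hinv).congr fun n => ?_
  simp [slope]

lemma tendsto_nat_mul_one_sub_div_rpow_mul_sub_one (a b s r : ℝ) :
    Tendsto (fun n : ℕ => n * ((1 - a / n) ^ s * (1 - b / n) ^ r - 1)) atTop
      (𝓝 (-(s * a) - r * b)) := by
  have hf : HasDerivAt (fun t : ℝ => (1 - a * t) ^ s * (1 - b * t) ^ r) (-(s * a) - r * b) 0 := by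
    have hA := ((hasDerivAt_id' (0 : ℝ)).const_mul a).const_sub 1
    have hB := ((hasDerivAt_id' (0 : ℝ)).const_mul b).const_sub 1
    refine ((hA.rpow_const (p := s) (by simp)).mul
      (hB.rpow_const (p := r) (by simp))).congr_deriv ?_
    simp only [mul_one, mul_zero, sub_zero, Real.one_rpow]
    ring
  convert hf.tendsto_nat_mul_sub using 3 with n
  simp [div_eq_mul_inv]

theorem poisson_states_chernoff_general {d : ℕ} (τ₁ τ₁' : Matrix (Fin d) (Fin d) ℂ)
    (hτ₁ : τ₁.PosSemidef) (hτ₁' : τ₁'.PosSemidef)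
    (N N' : ℝ) (hN : 0 < N) (hN' : 0 < N')
    (s : ℝ) :
    Filter.Tendsto
      (fun M : ℕ => cher (tpow (rareState N τ₁ M) M) (tpow (rareState N' τ₁' M) M) s)
      Filter.atTop
      (nhds (Complex.exp (((-(s * N) - (1 - s) * N' : ℝ) : ℂ)
        + ((N ^ s * N' ^ (1 - s) : ℝ) : ℂ) * cher τ₁ τ₁' s))) := by
  set L : ℂ :=
    ((-(s * N) - (1 - s) * N' : ℝ) : ℂ) + ((N ^ s * N' ^ (1 - s) : ℝ) : ℂ) * cher τ₁ τ₁' s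
  set g : ℕ → ℂ := fun M => (((1 - N / M) ^ s * (1 - N' / M) ^ (1 - s) - 1 : ℝ) : ℂ)
    + (((N / M) ^ s * (N' / M) ^ (1 - s) : ℝ) : ℂ) * cher τ₁ τ₁' s
  have hg : Tendsto (fun M : ℕ => M * g M) atTop (𝓝 L) := by
    refine ((Complex.continuous_ofReal.tendsto _).comp
      (tendsto_nat_mul_one_sub_div_rpow_mul_sub_one N N' s (1 - s))).add_const _ |>.congr' ?_
    filter_upwards [eventually_gt_atTop 0] with M hM
    rw [Function.comp_apply, ← mul_div_rpow_mul_div_rpow (Nat.cast_pos.mpr hM) hN.le hN'.le]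
    simp only [g]
    push_cast
    ring
  refine (Complex.tendsto_one_add_pow_exp_of_tendsto hg).congr' ?_
  filter_upwards [tendsto_natCast_atTop_atTop.eventually_gt_atTop N,
    tendsto_natCast_atTop_atTop.eventually_gt_atTop N'] with M hM hM'
  rw [cher_tpow (rareState_posSemidef hτ₁ hN.le hM.le) (rareState_posSemidef hτ₁' hN'.le hM'.le),
    cher_rareState hτ₁ hτ₁' hN hM hN' hM']
  simp only [g]
  push_cast
  ring

/-- The quantum Chernoff quantity between Poisson states in the Poisson limit. -/
theorem poisson_states_chernoff {d : ℕ} (τ₁ τ₁' : Matrix (Fin d) (Fin d) ℂ)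
    (hτ₁ : τ₁.PosSemidef) (hτ₁tr : τ₁.trace = 1)
    (hτ₁' : τ₁'.PosSemidef) (hτ₁'tr : τ₁'.trace = 1)
    (N N' : ℝ) (hN : 0 < N) (hN' : 0 < N')
    (s : ℝ) (hs0 : 0 ≤ s) (hs1 : s ≤ 1) :
    Filter.Tendsto
      (fun M : ℕ => cher (tpow (rareState N τ₁ M) M) (tpow (rareState N' τ₁' M) M) s)
      Filter.atTop
      (nhds (Complex.exp (((-(s * N) - (1 - s) * N' : ℝ) : ℂ)
        + ((N ^ s * N' ^ (1 - s) : ℝ) : ℂ) * cher τ₁ τ₁' s))) :=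
  poisson_states_chernoff_general τ₁ τ₁' hτ₁ hτ₁' N N' hN hN' s
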